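/- Suppose that for every R > 0 and every ball B_R(x*) ⊂ ℝⁿ the a priori estimate Σ_{h,l} ‖X_h X_l u‖_{L^p(B_R(x*))} ≤ C ‖Lu‖_{L^p(B_R(x*))} holds for all u ∈ C_0^∞(B_R(x*)), with C independent of x*. Suppose furthermore that ℝⁿ is covered by balls {B(x_α,R)} whose H-dilates have overlap bounded by N, and that there exist cutoff functions φ_α ∈ C_0^∞(B_{HR}(x_α)) with φ_α ≥ c₁ on B_R(x_α) and uniformly bounded first and second X-derivatives. Then the global estimate Σ_{h,l}‖X_h X_l u‖_{L^p(ℝⁿ)} ≤ c { ‖Lu‖_{L^p(ℝⁿ)} + Σ_h ‖X_h u‖_{L^p(ℝⁿ)} + ‖u‖_{L^p(ℝⁿ)} } holds for all u ∈ C_0^∞(ℝⁿ), with c depending only on C, N, c₁, the cutoff bounds, and the Leibniz structure of L. -/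

import Mathlib

open MeasureTheory Set ENNReal Finset

/-- The action of the vector field with coefficient vector `V` on a function `u`:
`(Xu)(x) = ⟨∇u(x), V(x)⟩`. -/
noncomputable def Xd (n : ℕ) (V : (Fin n → ℝ) → (Fin n → ℝ))
    (u : (Fin n → ℝ) → ℝ) : (Fin n → ℝ) → ℝ :=
  fun x => fderiv ℝ u x (V x)

/-- The nonvariational operator `Lu = Σ_{i,j} a_{ij}(x) X_i X_j u`. -/
noncomputable def Lop (n m : ℕ) (V : Fin m → (Fin n → ℝ) → (Fin n → ℝ))
    (a : Fin m → Fin m → (Fin n → ℝ) → ℝ) (u : (Fin n → ℝ) → ℝ) :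
    (Fin n → ℝ) → ℝ :=
  fun x => ∑ i, ∑ j, a i j x * Xd n (V i) (Xd n (V j) u) x

/-- The `L^p` norm of `g` on a set `s` (w.r.t. Lebesgue measure). -/
noncomputable def NpOn (n : ℕ) (p : ℝ) (g : (Fin n → ℝ) → ℝ)
    (s : Set (Fin n → ℝ)) : ℝ≥0∞ :=
  (∫⁻ x in s, (‖g x‖₊ : ℝ≥0∞) ^ p) ^ (1 / p)

section Aux

lemma Xd_contDiff {n : ℕ} {V : (Fin n → ℝ) → (Fin n → ℝ)} {u : (Fin n → ℝ) → ℝ}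
    (hV : ContDiff ℝ (⊤ : ℕ∞) V) (hu : ContDiff ℝ (⊤ : ℕ∞) u) : ContDiff ℝ (⊤ : ℕ∞) (Xd n V u) :=
  (hu.fderiv_right (by simp)).clm_apply hV

lemma Xd_mul {n : ℕ} {V : (Fin n → ℝ) → (Fin n → ℝ)} {f g : (Fin n → ℝ) → ℝ}
    (hf : ContDiff ℝ (⊤ : ℕ∞) f) (hg : ContDiff ℝ (⊤ : ℕ∞) g) (x : Fin n → ℝ) :
    Xd n V (fun y => f y * g y) x = f x * Xd n V g x + g x * Xd n V f x := by
  unfold Xd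
  rw [fderiv_fun_mul (hf.differentiable (by simp) x) (hg.differentiable (by simp) x)]
  simp [smul_eq_mul]

lemma Xd_Xd_mul {n : ℕ} {Vh Vl : (Fin n → ℝ) → (Fin n → ℝ)} {f g : (Fin n → ℝ) → ℝ}
    (hVh : ContDiff ℝ (⊤ : ℕ∞) Vh) (hVl : ContDiff ℝ (⊤ : ℕ∞) Vl)
    (hf : ContDiff ℝ (⊤ : ℕ∞) f) (hg : ContDiff ℝ (⊤ : ℕ∞) g) (x : Fin n → ℝ) :
    Xd n Vh (Xd n Vl (fun y => f y * g y)) x =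
      f x * Xd n Vh (Xd n Vl g) x + Xd n Vh f x * Xd n Vl g x
        + Xd n Vh g x * Xd n Vl f x + g x * Xd n Vh (Xd n Vl f) x := by
  have h1 : Xd n Vl (fun y => f y * g y) = fun y => f y * Xd n Vl g y + g y * Xd n Vl f y :=
    funext (Xd_mul hf hg)
  rw [h1]
  have hdg : ContDiff ℝ (⊤ : ℕ∞) (Xd n Vl g) := Xd_contDiff hVl hg
  have hdf : ContDiff ℝ (⊤ : ℕ∞) (Xd n Vl f) := Xd_contDiff hVl hf
  show fderiv ℝ (fun y => f y * Xd n Vl g y + g y * Xd n Vl f y) x (Vh x) = _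
  rw [fderiv_fun_add (f := fun y => f y * Xd n Vl g y) (g := fun y => g y * Xd n Vl f y) ((hf.differentiable (by simp) x).mul (hdg.differentiable (by simp) x))
    ((hg.differentiable (by simp) x).mul (hdf.differentiable (by simp) x)),
    fderiv_fun_mul (hf.differentiable (by simp) x) (hdg.differentiable (by simp) x),
    fderiv_fun_mul (hg.differentiable (by simp) x) (hdf.differentiable (by simp) x)]
  show (_ + _ + (_ + _) : (Fin n → ℝ) →L[ℝ] ℝ) (Vh x) = _
  simp only [ContinuousLinearMap.add_apply, ContinuousLinearMap.smul_apply, smul_eq_mul]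
  show _ = f x * fderiv ℝ (Xd n Vl g) x (Vh x) + fderiv ℝ f x (Vh x) * Xd n Vl g x
        + fderiv ℝ g x (Vh x) * Xd n Vl f x + g x * fderiv ℝ (Xd n Vl f) x (Vh x)
  ring

lemma Xd_zero_of_not_mem_tsupport {n : ℕ} {V : (Fin n → ℝ) → (Fin n → ℝ)}
    {g : (Fin n → ℝ) → ℝ} {x : Fin n → ℝ} (hx : x ∉ tsupport g) : Xd n V g x = 0 := by
  unfold Xd
  have : fderiv ℝ g x = 0 := by
    by_contra h
    exact hx (support_fderiv_subset ℝ h)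
  simp [this]

lemma tsupport_Xd_subset {n : ℕ} {V : (Fin n → ℝ) → (Fin n → ℝ)} {g : (Fin n → ℝ) → ℝ} :
    tsupport (Xd n V g) ⊆ tsupport g :=
  closure_minimal (fun x hx => by
    by_contra h
    exact hx (Xd_zero_of_not_mem_tsupport h)) (isClosed_tsupport g)

lemma Xd_zero_fun {n : ℕ} (V : (Fin n → ℝ) → (Fin n → ℝ)) :
    Xd n V (fun _ => (0:ℝ)) = fun _ => (0:ℝ) := by
  funext x
  unfold Xd
  simp [fderiv_const]

lemma Lop_mul_eq {n m : ℕ} {V : Fin m → (Fin n → ℝ) → (Fin n → ℝ)}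
    {a : Fin m → Fin m → (Fin n → ℝ) → ℝ} (hV : ∀ i, ContDiff ℝ (⊤ : ℕ∞) (V i))
    {f g : (Fin n → ℝ) → ℝ} (hf : ContDiff ℝ (⊤ : ℕ∞) f) (hg : ContDiff ℝ (⊤ : ℕ∞) g) (x : Fin n → ℝ) :
    Lop n m V a (fun y => f y * g y) x =
      f x * Lop n m V a g x
      + (∑ i, ∑ j, a i j x * (Xd n (V i) f x * Xd n (V j) g x + Xd n (V i) g x * Xd n (V j) f x))
      + g x * (∑ i, ∑ j, a i j x * Xd n (V i) (Xd n (V j) f) x) := by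
  unfold Lop
  rw [Finset.mul_sum, Finset.mul_sum, ← Finset.sum_add_distrib, ← Finset.sum_add_distrib]
  refine Finset.sum_congr rfl fun i _ => ?_
  rw [Finset.mul_sum, Finset.mul_sum, ← Finset.sum_add_distrib, ← Finset.sum_add_distrib]
  refine Finset.sum_congr rfl fun j _ => ?_
  rw [Xd_Xd_mul (hV i) (hV j) hf hg x]
  ring

lemma sum_lintegral_le {α : Type*} [MeasurableSpace α] (μ : Measure α) {κ : Type*}
    (s : Finset κ) (f : κ → α → ℝ≥0∞) :
    ∑ i ∈ s, ∫⁻ x, f i x ∂μ ≤ ∫⁻ x, ∑ i ∈ s, f i x ∂μ := by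
  induction s using Finset.cons_induction with
  | empty => simp
  | cons i s hi ih =>
      simp only [Finset.sum_cons]
      calc ∫⁻ x, f i x ∂μ + ∑ j ∈ s, ∫⁻ x, f j x ∂μ
          ≤ ∫⁻ x, f i x ∂μ + ∫⁻ x, ∑ j ∈ s, f j x ∂μ := by gcongr
        _ ≤ ∫⁻ x, (f i x + ∑ j ∈ s, f j x) ∂μ := le_lintegral_add _ _

lemma tsum_lintegral_le {α : Type*} [MeasurableSpace α] (μ : Measure α) {κ : Type*}
    (f : κ → α → ℝ≥0∞) :
    ∑' i, ∫⁻ x, f i x ∂μ ≤ ∫⁻ x, ∑' i, f i x ∂μ := by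
  rw [ENNReal.tsum_eq_iSup_sum]
  refine iSup_le fun s => (sum_lintegral_le μ s f).trans (lintegral_mono fun x => ?_)
  exact ENNReal.sum_le_tsum s

lemma Lp_sum_le {α : Type*} [MeasurableSpace α] (μ : Measure α) {κ : Type*}
    (s : Finset κ) (f : κ → α → ℝ≥0∞) (hf : ∀ i, AEMeasurable (f i) μ) {p : ℝ}
    (hp : 1 ≤ p) :
    (∫⁻ x, (∑ i ∈ s, f i x) ^ p ∂μ) ^ (1 / p) ≤
      ∑ i ∈ s, (∫⁻ x, f i x ^ p ∂μ) ^ (1 / p) := by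
  have hp0 : 0 < p := lt_of_lt_of_le zero_lt_one hp
  induction s using Finset.cons_induction with
  | empty =>
      simp only [Finset.sum_empty, ENNReal.zero_rpow_of_pos hp0, lintegral_zero,
        ENNReal.zero_rpow_of_pos (show (0:ℝ) < 1/p by positivity), le_refl]
  | cons i s hi ih =>
      simp only [Finset.sum_cons]
      calc (∫⁻ x, (f i x + ∑ j ∈ s, f j x) ^ p ∂μ) ^ (1 / p)
          ≤ (∫⁻ x, f i x ^ p ∂μ) ^ (1/p) + (∫⁻ x, (∑ j ∈ s, f j x) ^ p ∂μ) ^ (1/p) :=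
            ENNReal.lintegral_Lp_add_le (hf i) (Finset.aemeasurable_fun_sum _ fun j _ => hf j) hp
        _ ≤ _ := by gcongr

lemma two_rpow_aux {p : ℝ} (hp : 0 ≤ p) (x y : ℝ≥0∞) :
    (x + y) ^ p ≤ 2 ^ p * (x ^ p + y ^ p) := by
  calc (x + y) ^ p ≤ (2 * (x ⊔ y)) ^ p := by
        refine ENNReal.rpow_le_rpow ?_ hp
        rcases le_total x y with h | h
        · calc x + y ≤ y + y := by gcongr
            _ = 2 * y := (two_mul y).symm
            _ ≤ 2 * (x ⊔ y) := by gcongr; exact le_sup_right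
        · calc x + y ≤ x + x := by gcongr
            _ = 2 * x := (two_mul x).symm
            _ ≤ 2 * (x ⊔ y) := by gcongr; exact le_sup_left
    _ = 2 ^ p * (x ⊔ y) ^ p := ENNReal.mul_rpow_of_nonneg _ _ hp
    _ ≤ 2 ^ p * (x ^ p + y ^ p) := by
        gcongr
        rcases le_total x y with h | h
        · rw [sup_eq_right.mpr h]; exact le_add_self
        · rw [sup_eq_left.mpr h]; exact self_le_add_right _ _

lemma rpow_one_div_rpow {p : ℝ} (hp : p ≠ 0) (x : ℝ≥0∞) : (x ^ (1/p)) ^ p = x := by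
  rw [← ENNReal.rpow_mul, one_div, inv_mul_cancel₀ hp, ENNReal.rpow_one]

lemma rpow_rpow_one_div {p : ℝ} (hp : p ≠ 0) (x : ℝ≥0∞) : (x ^ p) ^ (1/p) = x := by
  rw [← ENNReal.rpow_mul, one_div, mul_inv_cancel₀ hp, ENNReal.rpow_one]

end Aux

/-- If the a priori estimate
`Σ ‖X_hX_l u‖_{L^p(B_R(x*))} ≤ C‖Lu‖_{L^p(B_R(x*))}` holds for all smooth `u`
compactly supported in any ball, with `C` independent of the center, and `ℝⁿ` is
covered by balls `B(x_α,R)` whose `H`-dilates have overlap bounded by `N`, with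
uniform cutoff functions `φ_α`, then the global estimate
`Σ‖X_hX_l u‖_{L^p(ℝⁿ)} ≤ c{‖Lu‖_{L^p} + Σ‖X_h u‖_{L^p} + ‖u‖_{L^p}}` holds. -/
theorem global_estimate_from_local_estimates
    (n m : ℕ) (p : ℝ) (hp : 1 < p)
    (V : Fin m → (Fin n → ℝ) → (Fin n → ℝ)) (hV : ∀ i, ContDiff ℝ (⊤ : ℕ∞) (V i))
    (a : Fin m → Fin m → (Fin n → ℝ) → ℝ)
    (Ca : ℝ) (ha : ∀ i j x, |a i j x| ≤ Ca)
    (Bl : (Fin n → ℝ) → ℝ → Set (Fin n → ℝ))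
    (R H : ℝ) (hR : 0 < R) (hH : 1 < H)
    (C : ℝ≥0∞) (hCfin : C ≠ ⊤)
    (hloc : ∀ R' : ℝ, 0 < R' → ∀ xs : Fin n → ℝ, ∀ u : (Fin n → ℝ) → ℝ,
      ContDiff ℝ (⊤ : ℕ∞) u → HasCompactSupport u → tsupport u ⊆ Bl xs R' →
        ∑ h, ∑ l, NpOn n p (Xd n (V h) (Xd n (V l) u)) (Bl xs R') ≤
          C * NpOn n p (Lop n m V a u) (Bl xs R'))
    (ι : Type) (ctr : ι → Fin n → ℝ)
    (hcov : (⋃ α : ι, Bl (ctr α) R) = univ)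
    (N : ℕ)
    (hover : ∀ x : Fin n → ℝ, {α : ι | x ∈ Bl (ctr α) (H * R)}.Finite ∧
      {α : ι | x ∈ Bl (ctr α) (H * R)}.ncard ≤ N)
    (φ : ι → (Fin n → ℝ) → ℝ)
    (c₁ c₂ : ℝ) (hc₁ : 0 < c₁)
    (hφsmooth : ∀ α, ContDiff ℝ (⊤ : ℕ∞) (φ α) ∧ HasCompactSupport (φ α))
    (hφsupp : ∀ α, tsupport (φ α) ⊆ Bl (ctr α) (H * R))
    (hφlow : ∀ α, ∀ x ∈ Bl (ctr α) R, c₁ ≤ φ α x)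
    (hφbdd : ∀ α, ∀ x : Fin n → ℝ,
      |φ α x| + (∑ h, |Xd n (V h) (φ α) x|) +
        (∑ h, ∑ l, |Xd n (V h) (Xd n (V l) (φ α)) x|) ≤ c₂) :
    ∃ c : ℝ≥0∞, c ≠ ⊤ ∧
      ∀ u : (Fin n → ℝ) → ℝ, ContDiff ℝ (⊤ : ℕ∞) u → HasCompactSupport u →
        ∑ h, ∑ l, NpOn n p (Xd n (V h) (Xd n (V l) u)) univ ≤
          c * (NpOn n p (Lop n m V a u) univ +
            (∑ h, NpOn n p (Xd n (V h) u) univ) + NpOn n p u univ) := by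
  classical
  have hp0 : (0:ℝ) < p := lt_trans one_pos hp
  have hpne : p ≠ 0 := ne_of_gt hp0
  have hp1d : (0:ℝ) < 1/p := by positivity
  -- basic constants
  set Ca' : ℝ := max Ca 0 with hCa'def
  have hCa'0 : 0 ≤ Ca' := le_max_right _ _
  have ha' : ∀ i j x, |a i j x| ≤ Ca' := fun i j x => (ha i j x).trans (le_max_left _ _)
  -- c₂ is nonnegative
  have hc₂0 : 0 ≤ c₂ := by
    have h0 : (0 : Fin n → ℝ) ∈ ⋃ α : ι, Bl (ctr α) R := by rw [hcov]; exact mem_univ _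
    obtain ⟨α₀, -⟩ := mem_iUnion.mp h0
    refine le_trans ?_ (hφbdd α₀ 0)
    positivity
  -- individual cutoff bounds
  have hb1 : ∀ α x, |φ α x| ≤ c₂ := by
    intro α x
    refine le_trans ?_ (hφbdd α x)
    have h1 : (0:ℝ) ≤ ∑ h, |Xd n (V h) (φ α) x| := by positivity
    have h2 : (0:ℝ) ≤ ∑ h, ∑ l, |Xd n (V h) (Xd n (V l) (φ α)) x| := by positivity
    linarith
  have hb2 : ∀ α x (h : Fin m), |Xd n (V h) (φ α) x| ≤ c₂ := by
    intro α x h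
    have : |Xd n (V h) (φ α) x| ≤ ∑ h', |Xd n (V h') (φ α) x| :=
      Finset.single_le_sum (f := fun h' => |Xd n (V h') (φ α) x|)
        (fun i _ => abs_nonneg _) (Finset.mem_univ h)
    refine le_trans this (le_trans ?_ (hφbdd α x))
    have h1 : (0:ℝ) ≤ |φ α x| := abs_nonneg _
    have h2 : (0:ℝ) ≤ ∑ h, ∑ l, |Xd n (V h) (Xd n (V l) (φ α)) x| := by positivity
    linarith
  have hb3 : ∀ α x (h l : Fin m), |Xd n (V h) (Xd n (V l) (φ α)) x| ≤ c₂ := by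
    intro α x h l
    have : |Xd n (V h) (Xd n (V l) (φ α)) x| ≤ ∑ h', ∑ l', |Xd n (V h') (Xd n (V l') (φ α)) x| := by
      refine le_trans (Finset.single_le_sum (f := fun l' => |Xd n (V h) (Xd n (V l') (φ α)) x|)
        (fun i _ => abs_nonneg _) (Finset.mem_univ l)) ?_
      exact Finset.single_le_sum (f := fun h' => ∑ l', |Xd n (V h') (Xd n (V l') (φ α)) x|)
        (fun i _ => Finset.sum_nonneg fun _ _ => abs_nonneg _) (Finset.mem_univ h)
    refine le_trans this (le_trans ?_ (hφbdd α x))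
    have h1 : (0:ℝ) ≤ |φ α x| := abs_nonneg _
    have h2 : (0:ℝ) ≤ ∑ h, |Xd n (V h) (φ α) x| := by positivity
    linarith
  have hb4 : ∀ α x, ∑ h, ∑ l, |Xd n (V h) (Xd n (V l) (φ α)) x| ≤ c₂ := by
    intro α x
    refine le_trans ?_ (hφbdd α x)
    have h1 : (0:ℝ) ≤ |φ α x| := abs_nonneg _
    have h2 : (0:ℝ) ≤ ∑ h, |Xd n (V h) (φ α) x| := by positivity
    linarith
  -- the Leibniz constant
  set K : ℝ := c₂ * (1 + 2*(m:ℝ)*Ca' + Ca') with hKdef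
  have hK0 : 0 ≤ K := by positivity
  -- countable dense subset
  obtain ⟨DD, hDDc, hDDd⟩ := TopologicalSpace.exists_countable_dense (Fin n → ℝ)
  -- the constants
  set KE : ℝ≥0∞ := ENNReal.ofReal K with hKEdef
  set κ₁ : ℝ≥0∞ := ((ENNReal.ofReal c₁)⁻¹) ^ p * 2 ^ p with hκ₁def
  set κ₂ : ℝ≥0∞ := (ENNReal.ofReal (2*c₂)) ^ p with hκ₂def
  set c₀ : ℝ≥0∞ := κ₁ ^ (1/p) * (2 * C * (N:ℝ≥0∞) ^ (1/p) * KE + κ₂ ^ (1/p)) with hc₀def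
  have hofc₁ : ENNReal.ofReal c₁ ≠ 0 := (ENNReal.ofReal_pos.mpr hc₁).ne'
  have h2top : (2:ℝ≥0∞) ^ p ≠ ⊤ := ENNReal.rpow_ne_top_of_nonneg hp0.le (by simp)
  have hκ₁top : κ₁ ≠ ⊤ := ENNReal.mul_ne_top
    (ENNReal.rpow_ne_top_of_nonneg hp0.le (ENNReal.inv_ne_top.mpr hofc₁)) h2top
  have hκ₂top : κ₂ ≠ ⊤ := ENNReal.rpow_ne_top_of_nonneg hp0.le ENNReal.ofReal_ne_top
  have hc₀top : c₀ ≠ ⊤ := by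
    refine ENNReal.mul_ne_top (ENNReal.rpow_ne_top_of_nonneg (by positivity) hκ₁top) ?_
    refine ENNReal.add_ne_top.mpr ⟨?_, ENNReal.rpow_ne_top_of_nonneg (by positivity) hκ₂top⟩
    exact ENNReal.mul_ne_top (ENNReal.mul_ne_top (ENNReal.mul_ne_top (by simp) hCfin)
      (ENNReal.rpow_ne_top_of_nonneg (by positivity) (ENNReal.natCast_ne_top N)))
      ENNReal.ofReal_ne_top
  refine ⟨(m:ℝ≥0∞) * m * c₀, ENNReal.mul_ne_top (ENNReal.mul_ne_top
    (ENNReal.natCast_ne_top m) (ENNReal.natCast_ne_top m)) hc₀top, ?_⟩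
  intro u hu hcu
  -- lower order majorants
  set W₀ : (Fin n → ℝ) → ℝ := fun x => (∑ h, |Xd n (V h) u x|) + |u x| with hW₀def
  set W : (Fin n → ℝ) → ℝ := fun x => |Lop n m V a u x| + W₀ x with hWdef
  have hW₀0 : ∀ x, 0 ≤ W₀ x := by
    intro x; rw [hW₀def]; positivity
  have hW₀meas : Measurable W₀ := by
    rw [hW₀def]
    exact ((continuous_finset_sum _ fun i _ =>
      (Xd_contDiff (hV i) hu).continuous.abs).add hu.continuous.abs).measurable
  -- products with cutoffs
  have hu'c : ∀ α, ContDiff ℝ (⊤ : ℕ∞) (fun y => φ α y * u y) := fun α => (hφsmooth α).1.mul hu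
  have hu'cpt : ∀ α, HasCompactSupport (fun y => φ α y * u y) := fun α =>
    HasCompactSupport.mul_right (hφsmooth α).2
  have hu'supp : ∀ α, tsupport (fun y => φ α y * u y) ⊆ Bl (ctr α) (H*R) := fun α =>
    le_trans (closure_mono (Function.support_mul_subset_left _ _)) (hφsupp α)
  -- pointwise bound for L(φu)
  have P1 : ∀ (α : ι) (x : Fin n → ℝ),
      |Lop n m V a (fun y => φ α y * u y) x| ≤ K * W x := by
    intro α x
    rw [Lop_mul_eq hV (hφsmooth α).1 hu x]
    have e1 : |φ α x * Lop n m V a u x| ≤ c₂ * |Lop n m V a u x| := by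
      rw [abs_mul]; exact mul_le_mul_of_nonneg_right (hb1 α x) (abs_nonneg _)
    have e2 : |∑ i, ∑ j, a i j x *
        (Xd n (V i) (φ α) x * Xd n (V j) u x + Xd n (V i) u x * Xd n (V j) (φ α) x)|
        ≤ 2*(m:ℝ)*Ca'*c₂ * (∑ h, |Xd n (V h) u x|) := by
      have hterm : ∀ i j : Fin m, |a i j x *
          (Xd n (V i) (φ α) x * Xd n (V j) u x + Xd n (V i) u x * Xd n (V j) (φ α) x)|
          ≤ Ca' * c₂ * (|Xd n (V j) u x| + |Xd n (V i) u x|) := by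
        intro i j
        have hA : |Xd n (V i) (φ α) x * Xd n (V j) u x| ≤ c₂ * |Xd n (V j) u x| := by
          rw [abs_mul]; exact mul_le_mul_of_nonneg_right (hb2 α x i) (abs_nonneg _)
        have hB : |Xd n (V i) u x * Xd n (V j) (φ α) x| ≤ c₂ * |Xd n (V i) u x| := by
          rw [abs_mul, mul_comm]
          exact mul_le_mul_of_nonneg_right (hb2 α x j) (abs_nonneg _)
        calc |a i j x * (Xd n (V i) (φ α) x * Xd n (V j) u x
              + Xd n (V i) u x * Xd n (V j) (φ α) x)|
            = |a i j x| * |Xd n (V i) (φ α) x * Xd n (V j) u x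
              + Xd n (V i) u x * Xd n (V j) (φ α) x| := abs_mul _ _
          _ ≤ Ca' * (c₂ * |Xd n (V j) u x| + c₂ * |Xd n (V i) u x|) := by
              refine mul_le_mul (ha' i j x) ((abs_add_le _ _).trans (add_le_add hA hB))
                (abs_nonneg _) hCa'0
          _ = Ca' * c₂ * (|Xd n (V j) u x| + |Xd n (V i) u x|) := by ring
      calc |∑ i, ∑ j, a i j x *
            (Xd n (V i) (φ α) x * Xd n (V j) u x + Xd n (V i) u x * Xd n (V j) (φ α) x)|
          ≤ ∑ i, ∑ j, |a i j x *
            (Xd n (V i) (φ α) x * Xd n (V j) u x + Xd n (V i) u x * Xd n (V j) (φ α) x)| :=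
            (Finset.abs_sum_le_sum_abs _ _).trans
              (Finset.sum_le_sum fun i _ => Finset.abs_sum_le_sum_abs _ _)
        _ ≤ ∑ i : Fin m, ∑ j : Fin m, Ca' * c₂ * (|Xd n (V j) u x| + |Xd n (V i) u x|) :=
            Finset.sum_le_sum fun i _ => Finset.sum_le_sum fun j _ => hterm i j
        _ = 2*(m:ℝ)*Ca'*c₂ * (∑ h, |Xd n (V h) u x|) := by
            simp only [mul_add, Finset.sum_add_distrib, ← Finset.mul_sum, Finset.sum_const,
              Finset.card_univ, Fintype.card_fin, nsmul_eq_mul]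
            ring
    have e3 : |u x * (∑ i, ∑ j, a i j x * Xd n (V i) (Xd n (V j) (φ α)) x)|
        ≤ Ca' * c₂ * |u x| := by
      rw [abs_mul]
      have : |∑ i, ∑ j, a i j x * Xd n (V i) (Xd n (V j) (φ α)) x| ≤ Ca' * c₂ := by
        calc |∑ i, ∑ j, a i j x * Xd n (V i) (Xd n (V j) (φ α)) x|
            ≤ ∑ i, ∑ j, |a i j x * Xd n (V i) (Xd n (V j) (φ α)) x| :=
              (Finset.abs_sum_le_sum_abs _ _).trans
                (Finset.sum_le_sum fun i _ => Finset.abs_sum_le_sum_abs _ _)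
          _ ≤ ∑ i : Fin m, ∑ j : Fin m, Ca' * |Xd n (V i) (Xd n (V j) (φ α)) x| := by
              refine Finset.sum_le_sum fun i _ => Finset.sum_le_sum fun j _ => ?_
              rw [abs_mul]
              exact mul_le_mul_of_nonneg_right (ha' i j x) (abs_nonneg _)
          _ = Ca' * ∑ i, ∑ j, |Xd n (V i) (Xd n (V j) (φ α)) x| := by
              simp only [← Finset.mul_sum]
          _ ≤ Ca' * c₂ := mul_le_mul_of_nonneg_left (hb4 α x) hCa'0
      calc |u x| * |∑ i, ∑ j, a i j x * Xd n (V i) (Xd n (V j) (φ α)) x|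
          ≤ |u x| * (Ca' * c₂) := mul_le_mul_of_nonneg_left this (abs_nonneg _)
        _ = Ca' * c₂ * |u x| := by ring
    have hLW : |Lop n m V a u x| ≤ W x := by
      rw [hWdef]; simp only []
      have := hW₀0 x; linarith
    have hSW : (∑ h, |Xd n (V h) u x|) ≤ W x := by
      rw [hWdef, hW₀def]; simp only []
      have h1 : (0:ℝ) ≤ |Lop n m V a u x| := abs_nonneg _
      have h2 : (0:ℝ) ≤ |u x| := abs_nonneg _
      linarith
    have huW : |u x| ≤ W x := by
      rw [hWdef, hW₀def]; simp only []
      have h1 : (0:ℝ) ≤ |Lop n m V a u x| := abs_nonneg _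
      have h2 : (0:ℝ) ≤ ∑ h, |Xd n (V h) u x| := by positivity
      linarith
    calc |φ α x * Lop n m V a u x
          + (∑ i, ∑ j, a i j x * (Xd n (V i) (φ α) x * Xd n (V j) u x
              + Xd n (V i) u x * Xd n (V j) (φ α) x))
          + u x * (∑ i, ∑ j, a i j x * Xd n (V i) (Xd n (V j) (φ α)) x)|
        ≤ |φ α x * Lop n m V a u x
          + (∑ i, ∑ j, a i j x * (Xd n (V i) (φ α) x * Xd n (V j) u x
              + Xd n (V i) u x * Xd n (V j) (φ α) x))|
          + |u x * (∑ i, ∑ j, a i j x * Xd n (V i) (Xd n (V j) (φ α)) x)| := abs_add_le _ _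
      _ ≤ |φ α x * Lop n m V a u x|
          + |∑ i, ∑ j, a i j x * (Xd n (V i) (φ α) x * Xd n (V j) u x
              + Xd n (V i) u x * Xd n (V j) (φ α) x)|
          + |u x * (∑ i, ∑ j, a i j x * Xd n (V i) (Xd n (V j) (φ α)) x)| := by
          have := abs_add_le (φ α x * Lop n m V a u x)
            (∑ i, ∑ j, a i j x * (Xd n (V i) (φ α) x * Xd n (V j) u x
              + Xd n (V i) u x * Xd n (V j) (φ α) x))
          linarith
      _ ≤ c₂ * |Lop n m V a u x| + 2*(m:ℝ)*Ca'*c₂ * (∑ h, |Xd n (V h) u x|)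
          + Ca' * c₂ * |u x| := by linarith
      _ ≤ c₂ * W x + 2*(m:ℝ)*Ca'*c₂ * W x + Ca' * c₂ * W x := by
          have m1 := mul_le_mul_of_nonneg_left hLW hc₂0
          have m2 := mul_le_mul_of_nonneg_left hSW (by positivity : (0:ℝ) ≤ 2*(m:ℝ)*Ca'*c₂)
          have m3 := mul_le_mul_of_nonneg_left huW (by positivity : (0:ℝ) ≤ Ca' * c₂)
          linarith
      _ = K * W x := by rw [hKdef]; ring
  -- pointwise bound for second derivatives on the small balls
  have P2 : ∀ (α : ι) (x : Fin n → ℝ) (h l : Fin m), x ∈ Bl (ctr α) R →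
      c₁ * |Xd n (V h) (Xd n (V l) u) x| ≤
        |Xd n (V h) (Xd n (V l) (fun y => φ α y * u y)) x| + 2*c₂ * W₀ x := by
    intro α x h l hx
    have hφx : c₁ ≤ φ α x := hφlow α x hx
    have hexp := Xd_Xd_mul (hV h) (hV l) (hφsmooth α).1 hu x
    have heq : φ α x * Xd n (V h) (Xd n (V l) u) x =
        Xd n (V h) (Xd n (V l) (fun y => φ α y * u y)) x
        - Xd n (V h) (φ α) x * Xd n (V l) u x - Xd n (V h) u x * Xd n (V l) (φ α) x
        - u x * Xd n (V h) (Xd n (V l) (φ α)) x := by rw [hexp]; ring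
    have hsl : |Xd n (V l) u x| ≤ ∑ h', |Xd n (V h') u x| :=
      Finset.single_le_sum (f := fun h' => |Xd n (V h') u x|)
        (fun i _ => abs_nonneg _) (Finset.mem_univ l)
    have hsh : |Xd n (V h) u x| ≤ ∑ h', |Xd n (V h') u x| :=
      Finset.single_le_sum (f := fun h' => |Xd n (V h') u x|)
        (fun i _ => abs_nonneg _) (Finset.mem_univ h)
    have hW₀x : W₀ x = (∑ h', |Xd n (V h') u x|) + |u x| := by rw [hW₀def]
    calc c₁ * |Xd n (V h) (Xd n (V l) u) x| ≤ φ α x * |Xd n (V h) (Xd n (V l) u) x| :=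
          mul_le_mul_of_nonneg_right hφx (abs_nonneg _)
      _ = |φ α x * Xd n (V h) (Xd n (V l) u) x| := by
          rw [abs_mul, abs_of_nonneg (le_trans hc₁.le hφx)]
      _ ≤ |Xd n (V h) (Xd n (V l) (fun y => φ α y * u y)) x|
          + |Xd n (V h) (φ α) x * Xd n (V l) u x| + |Xd n (V h) u x * Xd n (V l) (φ α) x|
          + |u x * Xd n (V h) (Xd n (V l) (φ α)) x| := by
          rw [heq]
          have t1 := abs_sub (Xd n (V h) (Xd n (V l) (fun y => φ α y * u y)) x
            - Xd n (V h) (φ α) x * Xd n (V l) u x - Xd n (V h) u x * Xd n (V l) (φ α) x)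
            (u x * Xd n (V h) (Xd n (V l) (φ α)) x)
          have t2 := abs_sub (Xd n (V h) (Xd n (V l) (fun y => φ α y * u y)) x
            - Xd n (V h) (φ α) x * Xd n (V l) u x) (Xd n (V h) u x * Xd n (V l) (φ α) x)
          have t3 := abs_sub (Xd n (V h) (Xd n (V l) (fun y => φ α y * u y)) x)
            (Xd n (V h) (φ α) x * Xd n (V l) u x)
          linarith
      _ ≤ |Xd n (V h) (Xd n (V l) (fun y => φ α y * u y)) x| + 2*c₂ * W₀ x := by
          have b1 : |Xd n (V h) (φ α) x * Xd n (V l) u x| ≤ c₂ * |Xd n (V l) u x| := by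
            rw [abs_mul]; exact mul_le_mul_of_nonneg_right (hb2 α x h) (abs_nonneg _)
          have b2 : |Xd n (V h) u x * Xd n (V l) (φ α) x| ≤ c₂ * |Xd n (V h) u x| := by
            rw [abs_mul, mul_comm]; exact mul_le_mul_of_nonneg_right (hb2 α x l) (abs_nonneg _)
          have b3 : |u x * Xd n (V h) (Xd n (V l) (φ α)) x| ≤ c₂ * |u x| := by
            rw [abs_mul, mul_comm]; exact mul_le_mul_of_nonneg_right (hb3 α x h l) (abs_nonneg _)
          have c1 := mul_le_mul_of_nonneg_left hsl hc₂0
          have c2 := mul_le_mul_of_nonneg_left hsh hc₂0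
          rw [hW₀x]
          have h2 : (0:ℝ) ≤ c₂ * |u x| := by positivity
          linarith
  -- the countable set of relevant indices
  set A : Set ι := {α | ¬ ∀ y, φ α y * u y = 0} with hAdef
  have hAc : A.Countable := by
    have hsub : A ⊆ ⋃ q ∈ DD, {α : ι | q ∈ Bl (ctr α) (H*R)} := by
      intro α hα
      obtain ⟨y, hy⟩ := not_forall.mp hα
      have hyφ : φ α y ≠ 0 := left_ne_zero_of_mul hy
      have hop : IsOpen (Function.support (φ α)) :=
        (hφsmooth α).1.continuous.isOpen_support
      obtain ⟨q, hqD, hqs⟩ := hDDd.exists_mem_open hop ⟨y, hyφ⟩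
      exact mem_biUnion hqD (hφsupp α (subset_tsupport _ hqs))
    exact (hDDc.biUnion fun q _ => ((hover q).1.countable)).mono hsub
  haveI : Countable ↥A := hAc.to_subtype
  have hAzero : ∀ α, α ∉ A → (fun y => φ α y * u y) = (fun _ => (0:ℝ)) := by
    intro α hα
    simp only [hAdef, mem_setOf_eq, not_not] at hα
    exact funext hα
  -- main estimate for a fixed pair (h,l)
  have main : ∀ h l : Fin m, NpOn n p (Xd n (V h) (Xd n (V l) u)) univ ≤
      c₀ * (NpOn n p (Lop n m V a u) univ +
        (∑ h', NpOn n p (Xd n (V h') u) univ) + NpOn n p u univ) := by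
    intro h l
    set ψ : ι → (Fin n → ℝ) → ℝ≥0∞ := fun α x =>
      (‖Xd n (V h) (Xd n (V l) (fun y => φ α y * u y)) x‖₊ : ℝ≥0∞) ^ p with hψdef
    set gL : ι → (Fin n → ℝ) → ℝ≥0∞ := fun α x =>
      (‖Lop n m V a (fun y => φ α y * u y) x‖₊ : ℝ≥0∞) ^ p with hgLdef
    have hψmeas : ∀ α, Measurable (ψ α) := by
      intro α
      rw [hψdef]
      exact ((Xd_contDiff (hV h) (Xd_contDiff (hV l)
        (hu'c α))).continuous.measurable.nnnorm.coe_nnreal_ennreal).pow_const _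
    have hψzero : ∀ (α : ι) (x : Fin n → ℝ),
        x ∉ tsupport (fun y => φ α y * u y) → ψ α x = 0 := by
      intro α x hx
      have h0 : Xd n (V h) (Xd n (V l) (fun y => φ α y * u y)) x = 0 :=
        Xd_zero_of_not_mem_tsupport fun hc => hx (tsupport_Xd_subset hc)
      rw [hψdef]
      simp only [h0, nnnorm_zero, ENNReal.coe_zero]
      exact ENNReal.zero_rpow_of_pos hp0
    -- step 1 : pointwise estimate
    have step1 : ∀ x, (‖Xd n (V h) (Xd n (V l) u) x‖₊ : ℝ≥0∞) ^ p ≤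
        κ₁ * ((∑' α : ι, ψ α x) + κ₂ * (ENNReal.ofReal (W₀ x)) ^ p) := by
      intro x
      obtain ⟨α, hxα⟩ := mem_iUnion.mp
        (show x ∈ ⋃ α : ι, Bl (ctr α) R by rw [hcov]; exact mem_univ x)
      have hreal := P2 α x h l hxα
      have h1 : ENNReal.ofReal c₁ * (‖Xd n (V h) (Xd n (V l) u) x‖₊ : ℝ≥0∞) ≤
          (‖Xd n (V h) (Xd n (V l) (fun y => φ α y * u y)) x‖₊ : ℝ≥0∞)
            + ENNReal.ofReal (2*c₂) * ENNReal.ofReal (W₀ x) := by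
        rw [← enorm_eq_nnnorm, Real.enorm_eq_ofReal_abs, ← enorm_eq_nnnorm, Real.enorm_eq_ofReal_abs,
          ← ENNReal.ofReal_mul hc₁.le, ← ENNReal.ofReal_mul (by positivity)]
        exact le_trans (ENNReal.ofReal_le_ofReal hreal) ENNReal.ofReal_add_le
      have h2 : (‖Xd n (V h) (Xd n (V l) u) x‖₊ : ℝ≥0∞) ≤ (ENNReal.ofReal c₁)⁻¹ *
          ((‖Xd n (V h) (Xd n (V l) (fun y => φ α y * u y)) x‖₊ : ℝ≥0∞)
            + ENNReal.ofReal (2*c₂) * ENNReal.ofReal (W₀ x)) := by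
        rw [← one_mul ((‖Xd n (V h) (Xd n (V l) u) x‖₊ : ℝ≥0∞)),
          ← ENNReal.inv_mul_cancel hofc₁ ENNReal.ofReal_ne_top, mul_assoc]
        exact mul_le_mul_right h1 _
      calc (‖Xd n (V h) (Xd n (V l) u) x‖₊ : ℝ≥0∞) ^ p
          ≤ ((ENNReal.ofReal c₁)⁻¹ *
            ((‖Xd n (V h) (Xd n (V l) (fun y => φ α y * u y)) x‖₊ : ℝ≥0∞)
              + ENNReal.ofReal (2*c₂) * ENNReal.ofReal (W₀ x))) ^ p :=
            ENNReal.rpow_le_rpow h2 hp0.le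
        _ = ((ENNReal.ofReal c₁)⁻¹) ^ p *
            ((‖Xd n (V h) (Xd n (V l) (fun y => φ α y * u y)) x‖₊ : ℝ≥0∞)
              + ENNReal.ofReal (2*c₂) * ENNReal.ofReal (W₀ x)) ^ p :=
            ENNReal.mul_rpow_of_nonneg _ _ hp0.le
        _ ≤ ((ENNReal.ofReal c₁)⁻¹) ^ p * (2 ^ p *
            ((‖Xd n (V h) (Xd n (V l) (fun y => φ α y * u y)) x‖₊ : ℝ≥0∞) ^ p
              + (ENNReal.ofReal (2*c₂) * ENNReal.ofReal (W₀ x)) ^ p)) := by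
            exact mul_le_mul_right (two_rpow_aux hp0.le _ _) _
        _ = κ₁ * ((‖Xd n (V h) (Xd n (V l) (fun y => φ α y * u y)) x‖₊ : ℝ≥0∞) ^ p
              + κ₂ * (ENNReal.ofReal (W₀ x)) ^ p) := by
            rw [hκ₁def, hκ₂def, ENNReal.mul_rpow_of_nonneg _ _ hp0.le, mul_assoc]
        _ ≤ κ₁ * ((∑' α : ι, ψ α x) + κ₂ * (ENNReal.ofReal (W₀ x)) ^ p) := by
            refine mul_le_mul_right (add_le_add_left ?_ _) _
            exact ENNReal.le_tsum α
    -- step 2 : integrate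
    have hmeasW₀p : Measurable fun x => (ENNReal.ofReal (W₀ x)) ^ p :=
      (hW₀meas.ennreal_ofReal).pow_const _
    have step2 : ∫⁻ x, (‖Xd n (V h) (Xd n (V l) u) x‖₊ : ℝ≥0∞) ^ p ≤
        κ₁ * ((∫⁻ x, ∑' α : ι, ψ α x) + κ₂ * ∫⁻ x, (ENNReal.ofReal (W₀ x)) ^ p) := by
      calc ∫⁻ x, (‖Xd n (V h) (Xd n (V l) u) x‖₊ : ℝ≥0∞) ^ p
          ≤ ∫⁻ x, κ₁ * ((∑' α : ι, ψ α x) + κ₂ * (ENNReal.ofReal (W₀ x)) ^ p) :=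
            lintegral_mono step1
        _ = κ₁ * ∫⁻ x, ((∑' α : ι, ψ α x) + κ₂ * (ENNReal.ofReal (W₀ x)) ^ p) :=
            lintegral_const_mul' _ _ hκ₁top
        _ = κ₁ * ((∫⁻ x, ∑' α : ι, ψ α x) + ∫⁻ x, κ₂ * (ENNReal.ofReal (W₀ x)) ^ p) := by
            rw [lintegral_add_right _ (hmeasW₀p.const_mul _)]
        _ = κ₁ * ((∫⁻ x, ∑' α : ι, ψ α x) + κ₂ * ∫⁻ x, (ENNReal.ofReal (W₀ x)) ^ p) := by
            rw [lintegral_const_mul' _ _ hκ₂top]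
    -- step 3 : the tsum term
    have hψA : ∀ x, (∑' α : ι, ψ α x) = ∑' α : ↥A, ψ (↑α) x := by
      intro x
      refine (tsum_subtype_eq_of_support_subset ?_).symm
      intro α hα
      by_contra hαA
      refine hα ?_
      rw [hψdef]
      simp only [hAzero α hαA, Xd_zero_fun, nnnorm_zero, ENNReal.coe_zero]
      exact ENNReal.zero_rpow_of_pos hp0
    have e2 : ∀ α : ι, ∫⁻ x, ψ α x ≤ C ^ p * ∫⁻ x, gL α x := by
      intro α
      have hsupp : Function.support (ψ α) ⊆ tsupport (fun y => φ α y * u y) := by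
        intro x hx
        by_contra hmem
        exact hx (hψzero α x hmem)
      have hKcl : IsClosed (tsupport (fun y => φ α y * u y)) := isClosed_tsupport _
      calc ∫⁻ x, ψ α x = ∫⁻ x in tsupport (fun y => φ α y * u y), ψ α x := by
            rw [← lintegral_indicator hKcl.measurableSet,
              Set.indicator_eq_self.mpr hsupp]
        _ ≤ ∫⁻ x in Bl (ctr α) (H*R), ψ α x :=
            lintegral_mono' (Measure.restrict_mono (hu'supp α) le_rfl) le_rfl
        _ = (NpOn n p (Xd n (V h) (Xd n (V l) (fun y => φ α y * u y)))
              (Bl (ctr α) (H*R))) ^ p := by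
            rw [show NpOn n p (Xd n (V h) (Xd n (V l) (fun y => φ α y * u y)))
              (Bl (ctr α) (H*R)) = (∫⁻ x in Bl (ctr α) (H*R), ψ α x) ^ (1/p) from rfl,
              rpow_one_div_rpow hpne]
        _ ≤ (C * NpOn n p (Lop n m V a (fun y => φ α y * u y)) (Bl (ctr α) (H*R))) ^ p := by
            refine ENNReal.rpow_le_rpow ?_ hp0.le
            refine le_trans ?_ (hloc (H*R) (by positivity) (ctr α) _
              (hu'c α) (hu'cpt α) (hu'supp α))
            refine le_trans ?_ (Finset.single_le_sum
              (f := fun h' => ∑ l', NpOn n p (Xd n (V h') (Xd n (V l')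
                (fun y => φ α y * u y))) (Bl (ctr α) (H*R)))
              (fun _ _ => zero_le) (Finset.mem_univ h))
            exact Finset.single_le_sum
              (f := fun l' => NpOn n p (Xd n (V h) (Xd n (V l')
                (fun y => φ α y * u y))) (Bl (ctr α) (H*R)))
              (fun _ _ => zero_le) (Finset.mem_univ l)
        _ = C ^ p * (NpOn n p (Lop n m V a (fun y => φ α y * u y))
              (Bl (ctr α) (H*R))) ^ p := ENNReal.mul_rpow_of_nonneg _ _ hp0.le
        _ = C ^ p * ∫⁻ x in Bl (ctr α) (H*R), gL α x := by
            rw [show NpOn n p (Lop n m V a (fun y => φ α y * u y)) (Bl (ctr α) (H*R))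
              = (∫⁻ x in Bl (ctr α) (H*R), gL α x) ^ (1/p) from rfl,
              rpow_one_div_rpow hpne]
        _ ≤ C ^ p * ∫⁻ x, gL α x := by
            exact mul_le_mul_right (lintegral_mono' Measure.restrict_le_self le_rfl) _
    have e3 : ∀ x, (∑' α : ↥A, gL (↑α) x) ≤
        (N:ℝ≥0∞) * (KE^p * (ENNReal.ofReal (W x))^p) := by
      intro x
      have hfin := (hover x).1
      have hle1 : (∑' α : ↥A, gL (↑α) x) ≤ ∑' α : ι, gL α x := by
        rw [_root_.tsum_subtype A (fun α => gL α x)]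
        refine ENNReal.tsum_le_tsum fun α => ?_
        by_cases hα : α ∈ A
        · rw [Set.indicator_of_mem hα]
        · rw [Set.indicator_of_notMem hα]; exact zero_le
      have hvanish : ∀ α : ι, α ∉ hfin.toFinset → gL α x = 0 := by
        intro α hα
        rw [Set.Finite.mem_toFinset] at hα
        have hnot : x ∉ tsupport (fun y => φ α y * u y) := fun hmem => hα (hu'supp α hmem)
        have hz : ∀ i j : Fin m, Xd n (V i) (Xd n (V j) (fun y => φ α y * u y)) x = 0 :=
          fun i j => Xd_zero_of_not_mem_tsupport fun hc => hnot (tsupport_Xd_subset hc)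
        have hL0 : Lop n m V a (fun y => φ α y * u y) x = 0 := by
          unfold Lop
          simp [hz]
        rw [hgLdef]
        simp only [hL0, nnnorm_zero, ENNReal.coe_zero]
        exact ENNReal.zero_rpow_of_pos hp0
      have hbound : ∀ α ∈ hfin.toFinset, gL α x ≤ KE^p * (ENNReal.ofReal (W x))^p := by
        intro α _
        calc gL α x = (ENNReal.ofReal |Lop n m V a (fun y => φ α y * u y) x|)^p := by
              rw [hgLdef]; simp only [← enorm_eq_nnnorm, Real.enorm_eq_ofReal_abs]
          _ ≤ (ENNReal.ofReal (K * W x))^p :=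
              ENNReal.rpow_le_rpow (ENNReal.ofReal_le_ofReal (P1 α x)) hp0.le
          _ = KE^p * (ENNReal.ofReal (W x))^p := by
              rw [hKEdef, ← ENNReal.mul_rpow_of_nonneg _ _ hp0.le, ENNReal.ofReal_mul hK0]
      calc (∑' α : ↥A, gL (↑α) x) ≤ ∑ α ∈ hfin.toFinset, gL α x :=
            hle1.trans_eq (tsum_eq_sum hvanish)
        _ ≤ hfin.toFinset.card • (KE^p * (ENNReal.ofReal (W x))^p) :=
            Finset.sum_le_card_nsmul _ _ _ hbound
        _ ≤ (N:ℝ≥0∞) * (KE^p * (ENNReal.ofReal (W x))^p) := by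
            rw [nsmul_eq_mul]
            refine mul_le_mul_left ?_ _
            have hcard : hfin.toFinset.card ≤ N := by
              rw [← Set.ncard_eq_toFinset_card _ hfin]
              exact (hover x).2
            exact_mod_cast hcard
    have step3 : ∫⁻ x, (∑' α : ι, ψ α x) ≤
        C^p * (N:ℝ≥0∞) * KE^p * ∫⁻ x, (ENNReal.ofReal (W x)) ^ p := by
      calc ∫⁻ x, (∑' α : ι, ψ α x) = ∫⁻ x, ∑' α : ↥A, ψ (↑α) x :=
            lintegral_congr fun x => hψA x
        _ = ∑' α : ↥A, ∫⁻ x, ψ (↑α) x :=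
            lintegral_tsum fun α => (hψmeas α).aemeasurable
        _ ≤ ∑' α : ↥A, C^p * ∫⁻ x, gL (↑α) x := ENNReal.tsum_le_tsum fun α => e2 α
        _ = C^p * ∑' α : ↥A, ∫⁻ x, gL (↑α) x := ENNReal.tsum_mul_left
        _ ≤ C^p * ∫⁻ x, ∑' α : ↥A, gL (↑α) x :=
            mul_le_mul_right (tsum_lintegral_le volume fun (α : ↥A) x => gL (↑α) x) _
        _ ≤ C^p * ∫⁻ x, (N:ℝ≥0∞) * (KE^p * (ENNReal.ofReal (W x))^p) :=
            mul_le_mul_right (lintegral_mono e3) _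
        _ = C^p * (N:ℝ≥0∞) * KE^p * ∫⁻ x, (ENNReal.ofReal (W x)) ^ p := by
            rw [lintegral_const_mul' _ _ (ENNReal.natCast_ne_top N),
              lintegral_const_mul' _ _ (ENNReal.rpow_ne_top_of_nonneg hp0.le
                ENNReal.ofReal_ne_top)]
            ring
    -- step 4 : the W-term against the right-hand side norms
    have hIA : (∫⁻ x, (ENNReal.ofReal |Lop n m V a u x|) ^ p) ^ (1/p) =
        NpOn n p (Lop n m V a u) univ := by
      rw [show NpOn n p (Lop n m V a u) univ
        = (∫⁻ x in univ, (‖Lop n m V a u x‖₊ : ℝ≥0∞) ^ p) ^ (1/p) from rfl,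
        Measure.restrict_univ]
      simp only [← enorm_eq_nnnorm, Real.enorm_eq_ofReal_abs]
    have hmeas1 : ∀ h' : Fin m,
        AEMeasurable (fun x => (‖Xd n (V h') u x‖₊ : ℝ≥0∞)) volume := fun h' =>
      ((Xd_contDiff (hV h') hu).continuous.measurable.nnnorm.coe_nnreal_ennreal).aemeasurable
    have hmeasu : AEMeasurable (fun x => (‖u x‖₊ : ℝ≥0∞)) volume :=
      (hu.continuous.measurable.nnnorm.coe_nnreal_ennreal).aemeasurable
    have hIB : (∫⁻ x, (ENNReal.ofReal (W₀ x)) ^ p) ^ (1/p) ≤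
        (∑ h', NpOn n p (Xd n (V h') u) univ) + NpOn n p u univ := by
      have hdec : ∀ x, ENNReal.ofReal (W₀ x) =
          ((fun x => ∑ h', (‖Xd n (V h') u x‖₊ : ℝ≥0∞)) + fun x => (‖u x‖₊ : ℝ≥0∞)) x := by
        intro x
        rw [hW₀def]
        simp only [Pi.add_apply]
        rw [ENNReal.ofReal_add (by positivity) (abs_nonneg _),
          ENNReal.ofReal_sum_of_nonneg (fun i _ => abs_nonneg _)]
        simp only [← enorm_eq_nnnorm, Real.enorm_eq_ofReal_abs]
      calc (∫⁻ x, (ENNReal.ofReal (W₀ x)) ^ p) ^ (1/p)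
          = (∫⁻ x, (((fun x => ∑ h', (‖Xd n (V h') u x‖₊ : ℝ≥0∞))
              + fun x => (‖u x‖₊ : ℝ≥0∞)) x) ^ p) ^ (1/p) := by
            congr 1
            exact lintegral_congr fun x => by rw [hdec x]
        _ ≤ (∫⁻ x, (∑ h', (‖Xd n (V h') u x‖₊ : ℝ≥0∞)) ^ p) ^ (1/p)
            + (∫⁻ x, (‖u x‖₊ : ℝ≥0∞) ^ p) ^ (1/p) :=
            ENNReal.lintegral_Lp_add_le
              (Finset.aemeasurable_fun_sum _ fun i _ => hmeas1 i) hmeasu hp.le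
        _ ≤ (∑ h', (∫⁻ x, (‖Xd n (V h') u x‖₊ : ℝ≥0∞) ^ p) ^ (1/p))
            + (∫⁻ x, (‖u x‖₊ : ℝ≥0∞) ^ p) ^ (1/p) := by
            gcongr
            exact Lp_sum_le volume Finset.univ _ (fun i => hmeas1 i) hp.le
        _ = (∑ h', NpOn n p (Xd n (V h') u) univ) + NpOn n p u univ := by
            simp only [NpOn, Measure.restrict_univ]
    have step4 : (∫⁻ x, (ENNReal.ofReal (W x)) ^ p) ^ (1/p) ≤
        2 * (NpOn n p (Lop n m V a u) univ +
          (∑ h', NpOn n p (Xd n (V h') u) univ) + NpOn n p u univ) := by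
      have h1 : ∀ x, (ENNReal.ofReal (W x))^p ≤
          2^p * ((ENNReal.ofReal |Lop n m V a u x|)^p + (ENNReal.ofReal (W₀ x))^p) := by
        intro x
        rw [hWdef]
        simp only []
        rw [ENNReal.ofReal_add (abs_nonneg _) (hW₀0 x)]
        exact two_rpow_aux hp0.le _ _
      have h2 : ∫⁻ x, (ENNReal.ofReal (W x))^p ≤
          2^p * ((∫⁻ x, (ENNReal.ofReal |Lop n m V a u x|)^p)
            + ∫⁻ x, (ENNReal.ofReal (W₀ x))^p) := by
        calc ∫⁻ x, (ENNReal.ofReal (W x))^p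
            ≤ ∫⁻ x, 2^p * ((ENNReal.ofReal |Lop n m V a u x|)^p
                + (ENNReal.ofReal (W₀ x))^p) := lintegral_mono h1
          _ = 2^p * ∫⁻ x, ((ENNReal.ofReal |Lop n m V a u x|)^p
                + (ENNReal.ofReal (W₀ x))^p) := lintegral_const_mul' _ _ h2top
          _ = 2^p * ((∫⁻ x, (ENNReal.ofReal |Lop n m V a u x|)^p)
                + ∫⁻ x, (ENNReal.ofReal (W₀ x))^p) := by
              rw [lintegral_add_right _ hmeasW₀p]
      calc (∫⁻ x, (ENNReal.ofReal (W x))^p) ^ (1/p)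
          ≤ (2^p * ((∫⁻ x, (ENNReal.ofReal |Lop n m V a u x|)^p)
              + ∫⁻ x, (ENNReal.ofReal (W₀ x))^p)) ^ (1/p) :=
            ENNReal.rpow_le_rpow h2 hp1d.le
        _ = 2 * ((∫⁻ x, (ENNReal.ofReal |Lop n m V a u x|)^p)
              + ∫⁻ x, (ENNReal.ofReal (W₀ x))^p) ^ (1/p) := by
            rw [ENNReal.mul_rpow_of_nonneg _ _ hp1d.le, rpow_rpow_one_div hpne]
        _ ≤ 2 * ((∫⁻ x, (ENNReal.ofReal |Lop n m V a u x|)^p) ^ (1/p)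
              + (∫⁻ x, (ENNReal.ofReal (W₀ x))^p) ^ (1/p)) := by
            refine mul_le_mul_right (ENNReal.rpow_add_le_add_rpow _ _ hp1d.le ?_) _
            rw [div_le_one hp0]; exact hp.le
        _ ≤ 2 * (NpOn n p (Lop n m V a u) univ +
              ((∑ h', NpOn n p (Xd n (V h') u) univ) + NpOn n p u univ)) := by
            refine mul_le_mul_right (add_le_add (le_of_eq hIA) hIB) _
        _ = 2 * (NpOn n p (Lop n m V a u) univ +
          (∑ h', NpOn n p (Xd n (V h') u) univ) + NpOn n p u univ) := by ring
    have hfinal1 : (∫⁻ x, ∑' α : ι, ψ α x) ^ (1/p) ≤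
        C * (N:ℝ≥0∞)^(1/p) * KE * (∫⁻ x, (ENNReal.ofReal (W x)) ^ p) ^ (1/p) := by
      calc (∫⁻ x, ∑' α : ι, ψ α x) ^ (1/p)
          ≤ (C^p * (N:ℝ≥0∞) * KE^p * ∫⁻ x, (ENNReal.ofReal (W x)) ^ p) ^ (1/p) :=
            ENNReal.rpow_le_rpow step3 hp1d.le
        _ = C * (N:ℝ≥0∞)^(1/p) * KE * (∫⁻ x, (ENNReal.ofReal (W x)) ^ p) ^ (1/p) := by
            rw [ENNReal.mul_rpow_of_nonneg _ _ hp1d.le, ENNReal.mul_rpow_of_nonneg _ _ hp1d.le,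
              ENNReal.mul_rpow_of_nonneg _ _ hp1d.le, rpow_rpow_one_div hpne,
              rpow_rpow_one_div hpne]
    have hRHSle : (∫⁻ x, (ENNReal.ofReal (W₀ x)) ^ p) ^ (1/p) ≤
        NpOn n p (Lop n m V a u) univ +
          (∑ h', NpOn n p (Xd n (V h') u) univ) + NpOn n p u univ := by
      refine hIB.trans ?_
      exact add_le_add_left le_add_self _
    calc NpOn n p (Xd n (V h) (Xd n (V l) u)) univ
        = (∫⁻ x, (‖Xd n (V h) (Xd n (V l) u) x‖₊ : ℝ≥0∞) ^ p) ^ (1/p) := by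
          rw [show NpOn n p (Xd n (V h) (Xd n (V l) u)) univ
            = (∫⁻ x in univ, (‖Xd n (V h) (Xd n (V l) u) x‖₊ : ℝ≥0∞) ^ p) ^ (1/p) from rfl,
            Measure.restrict_univ]
      _ ≤ (κ₁ * ((∫⁻ x, ∑' α : ι, ψ α x) + κ₂ * ∫⁻ x, (ENNReal.ofReal (W₀ x)) ^ p)) ^ (1/p) :=
          ENNReal.rpow_le_rpow step2 hp1d.le
      _ = κ₁ ^ (1/p) * ((∫⁻ x, ∑' α : ι, ψ α x)
            + κ₂ * ∫⁻ x, (ENNReal.ofReal (W₀ x)) ^ p) ^ (1/p) :=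
          ENNReal.mul_rpow_of_nonneg _ _ hp1d.le
      _ ≤ κ₁ ^ (1/p) * ((∫⁻ x, ∑' α : ι, ψ α x) ^ (1/p)
            + (κ₂ * ∫⁻ x, (ENNReal.ofReal (W₀ x)) ^ p) ^ (1/p)) := by
          refine mul_le_mul_right (ENNReal.rpow_add_le_add_rpow _ _ hp1d.le ?_) _
          rw [div_le_one hp0]; exact hp.le
      _ = κ₁ ^ (1/p) * ((∫⁻ x, ∑' α : ι, ψ α x) ^ (1/p)
            + κ₂ ^ (1/p) * (∫⁻ x, (ENNReal.ofReal (W₀ x)) ^ p) ^ (1/p)) := by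
          rw [ENNReal.mul_rpow_of_nonneg κ₂ _ hp1d.le]
      _ ≤ κ₁ ^ (1/p) * (C * (N:ℝ≥0∞)^(1/p) * KE * (2 * (NpOn n p (Lop n m V a u) univ +
          (∑ h', NpOn n p (Xd n (V h') u) univ) + NpOn n p u univ))
            + κ₂ ^ (1/p) * (NpOn n p (Lop n m V a u) univ +
          (∑ h', NpOn n p (Xd n (V h') u) univ) + NpOn n p u univ)) := by
          refine mul_le_mul_right (add_le_add ?_ ?_) _
          · exact hfinal1.trans (mul_le_mul_right step4 _)
          · exact mul_le_mul_right hRHSle _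
      _ = c₀ * (NpOn n p (Lop n m V a u) univ +
          (∑ h', NpOn n p (Xd n (V h') u) univ) + NpOn n p u univ) := by
          rw [hc₀def]; ring

  calc ∑ h, ∑ l, NpOn n p (Xd n (V h) (Xd n (V l) u)) univ
      ≤ ∑ _h : Fin m, ∑ _l : Fin m, c₀ * (NpOn n p (Lop n m V a u) univ +
          (∑ h', NpOn n p (Xd n (V h') u) univ) + NpOn n p u univ) :=
        Finset.sum_le_sum fun h _ => Finset.sum_le_sum fun l _ => main h l
    _ = (m:ℝ≥0∞) * m * c₀ * (NpOn n p (Lop n m V a u) univ +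
          (∑ h', NpOn n p (Xd n (V h') u) univ) + NpOn n p u univ) := by
        simp only [Finset.sum_const, Finset.card_univ, Fintype.card_fin, nsmul_eq_mul]
        ring
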